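/- For every n ≥ 3, every element w_n ∈ V_n^* can be written as a finite product w_n = ∏_{j=1}^{k} g_j a_j g_j^{−1}, where each a_j belongs to the set V_n = {λ_{in}, λ_{in}^{−1}, λ_{ni}, λ_{ni}^{−1} : 1 ≤ i ≤ n−1} and each g_j belongs to the image ι_n(VP_{n−1}). -/

import Mathlib

/-- Generators of the pure virtual braid group `VP n`: ordered pairs of distinct
indices, the pair `(i, j)` corresponding to the generator `λ_{ij}`. -/
def Gen (n : ℕ) : Type := {p : Fin n × Fin n // p.1 ≠ p.2}

instance (n : ℕ) : DecidableEq (Gen n) :=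
  fun a b => decidable_of_iff (a.1 = b.1) Subtype.ext_iff.symm

/-- The generator `λ_{ij}` inside the free group on the generators. -/
def lamF {n : ℕ} {i j : Fin n} (h : i ≠ j) : FreeGroup (Gen n) :=
  FreeGroup.of ⟨(i, j), h⟩

/-- `s(ab) = 1` if `a < b`, and `-1` otherwise. -/
def sgn {n : ℕ} (a b : Fin n) : ℤ := if a < b then 1 else -1

/-- The defining relators of the pure virtual braid group `VP n`:
(1) `λ_{jk} λ_{im} = λ_{im} λ_{jk}` for pairwise distinct `i, j, k, m`;
(2) `λ_{ki}^{s(ki)} λ_{kj}^{s(kj)} λ_{ij}^{s(ij)} = λ_{ij}^{s(ij)} λ_{kj}^{s(kj)} λ_{ki}^{s(ki)}`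
for pairwise distinct `i, j, k`. -/
def vpRels (n : ℕ) : Set (FreeGroup (Gen n)) :=
  {r | ∃ (i j k m : Fin n) (hjk : j ≠ k) (him : i ≠ m),
      i ≠ j ∧ i ≠ k ∧ j ≠ m ∧ k ≠ m ∧
      r = lamF hjk * lamF him * (lamF hjk)⁻¹ * (lamF him)⁻¹} ∪
  {r | ∃ (i j k : Fin n) (hki : k ≠ i) (hkj : k ≠ j) (hij : i ≠ j),
      r = (lamF hki ^ sgn k i * lamF hkj ^ sgn k j * lamF hij ^ sgn i j) *
          (lamF hij ^ sgn i j * lamF hkj ^ sgn k j * lamF hki ^ sgn k i)⁻¹}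

/-- The pure virtual braid group on `n` strands, as a presented group. -/
abbrev VP (n : ℕ) : Type := PresentedGroup (vpRels n)

/-- The generator `λ_{ij}` of `VP n`. -/
def lam {n : ℕ} {i j : Fin n} (h : i ≠ j) : VP n := PresentedGroup.of ⟨(i, j), h⟩

/-- The order-preserving inclusion of indices `{1,…,n−1} ⊆ {1,…,n}`. -/
def emb (n : ℕ) : Fin (n - 1) → Fin n := Fin.castLE (Nat.sub_le n 1)

/-- The last index `n` (in one-based numbering) of `Fin n`. -/
def lastIdx (n : ℕ) (hn : 0 < n) : Fin n := ⟨n - 1, by omega⟩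

/-- The set `{λ_{in}, λ_{ni} : 1 ≤ i ≤ n−1}` whose normal closure is `V_n^*`. -/
def VstarSet (n : ℕ) (hn : 0 < n) : Set (VP n) :=
  {x | ∃ (i : Fin n) (hi : i ≠ lastIdx n hn), x = lam hi ∨ x = lam hi.symm}

/-!
Let `K` be the image of `ι` and `S` the set `{λ_{in}, λ_{ni}}`. Every generator `λ_{ij}` of
`VP n` lies in `K` or in `S`, so `K` and `S` generate `VP n`. The subgroup `H` generated by the
`K`-conjugates of `S ∪ S⁻¹` is normalized by `K` by construction and by `S` because `S ⊆ H`,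
hence it is normal; it therefore contains the normal closure of `S`. As `H` is generated by an
inverse-closed set, each of its elements is a plain product of such conjugates.
-/

namespace Subgroup

variable {G : Type*} [Group G]

def conjugatesBy (K : Subgroup G) (S : Set G) : Set G :=
  {x | ∃ g ∈ K, ∃ a ∈ S, x = g * a * g⁻¹}

variable {K : Subgroup G} {S : Set G}

theorem subset_conjugatesBy : S ⊆ conjugatesBy K S :=
  fun a ha => ⟨1, K.one_mem, a, ha, by group⟩

theorem inv_mem_conjugatesBy (hS : S⁻¹ ⊆ S) {x : G} (hx : x ∈ conjugatesBy K S) :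
    x⁻¹ ∈ conjugatesBy K S := by
  obtain ⟨g, hg, a, ha, rfl⟩ := hx
  exact ⟨g, hg, a⁻¹, hS (Set.inv_mem_inv.2 ha), by group⟩

theorem conj_mem_closure_conjugatesBy {g x : G} (hg : g ∈ K)
    (hx : x ∈ closure (conjugatesBy K S)) : g * x * g⁻¹ ∈ closure (conjugatesBy K S) := by
  induction hx using closure_induction with
  | mem c hc =>
    obtain ⟨g', hg', a, ha, rfl⟩ := hc
    exact subset_closure ⟨g * g', K.mul_mem hg hg', a, ha, by group⟩
  | one => simp
  | mul y z _ _ hy hz =>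
    simpa only [mul_assoc, inv_mul_cancel_left] using mul_mem hy hz
  | inv y _ hy =>
    simpa only [mul_inv_rev, inv_inv, mul_assoc] using inv_mem hy

theorem le_normalizer_closure_conjugatesBy :
    K ≤ normalizer (closure (conjugatesBy K S) : Set G) := by
  intro g hg
  refine mem_normalizer_iff.2 fun x => ⟨conj_mem_closure_conjugatesBy hg, fun hx => ?_⟩
  simpa only [mul_assoc, inv_mul_cancel_left, inv_inv, inv_mul_cancel, mul_one] using
    conj_mem_closure_conjugatesBy (K.inv_mem hg) hx

theorem normal_closure_conjugatesBy (hKS : K ⊔ closure S = ⊤) :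
    (closure (conjugatesBy K S)).Normal := by
  have hS : closure S ≤ normalizer (closure (conjugatesBy K S) : Set G) :=
    (closure_mono subset_conjugatesBy).trans le_normalizer
  rw [← normalizer_eq_top_iff, eq_top_iff, ← hKS]
  exact sup_le le_normalizer_closure_conjugatesBy hS

theorem exists_list_of_mem_normalClosure (hKS : K ⊔ closure S = ⊤) {w : G}
    (hw : w ∈ normalClosure S) :
    ∃ l : List G, (∀ x ∈ l, x ∈ conjugatesBy K (S ∪ S⁻¹)) ∧ l.prod = w := by
  have hT : (S ∪ S⁻¹)⁻¹ ⊆ S ∪ S⁻¹ := by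
    rw [Set.union_inv, inv_inv, Set.union_comm]
  have hKT : K ⊔ closure (S ∪ S⁻¹) = ⊤ :=
    top_unique (hKS ▸ sup_le_sup_left (closure_mono Set.subset_union_left) K)
  have : (closure (conjugatesBy K (S ∪ S⁻¹))).Normal := normal_closure_conjugatesBy hKT
  have hwT : w ∈ closure (conjugatesBy K (S ∪ S⁻¹)) :=
    normalClosure_le_normal ((Set.subset_union_left.trans subset_conjugatesBy).trans
      subset_closure) hw
  have hinv : (conjugatesBy K (S ∪ S⁻¹))⁻¹ ⊆ conjugatesBy K (S ∪ S⁻¹) := fun x hx =>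
    inv_inv x ▸ inv_mem_conjugatesBy hT hx
  rw [← mem_toSubmonoid, closure_toSubmonoid, Set.union_eq_left.2 hinv] at hwT
  exact Submonoid.exists_list_of_mem_closure hwT

end Subgroup

theorem exists_emb_eq_of_ne_lastIdx {n : ℕ} {hn : 0 < n} {i : Fin n} (hi : i ≠ lastIdx n hn) :
    ∃ a : Fin (n - 1), emb n a = i :=
  ⟨⟨i, by have := Fin.val_ne_iff.2 hi; simp only [lastIdx] at this; omega⟩, rfl⟩

theorem sup_closure_vstarSet_eq_top {n : ℕ} (hn : 0 < n) (ι : VP (n - 1) →* VP n)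
    (hι : ∀ (a b : Fin (n - 1)) (hab : a ≠ b) (hab' : emb n a ≠ emb n b),
      ι (lam hab) = lam hab') :
    ι.range ⊔ Subgroup.closure (VstarSet n hn) = ⊤ := by
  rw [eq_top_iff, ← PresentedGroup.closure_range_of, Subgroup.closure_le]
  rintro _ ⟨⟨⟨i, j⟩, hij⟩, rfl⟩
  by_cases hi : i = lastIdx n hn
  · subst hi
    exact Subgroup.mem_sup_right (Subgroup.subset_closure ⟨j, hij.symm, Or.inr rfl⟩)
  by_cases hj : j = lastIdx n hn
  · subst hj
    exact Subgroup.mem_sup_right (Subgroup.subset_closure ⟨i, hij, Or.inl rfl⟩)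
  obtain ⟨a, rfl⟩ := exists_emb_eq_of_ne_lastIdx hi
  obtain ⟨b, rfl⟩ := exists_emb_eq_of_ne_lastIdx hj
  exact Subgroup.mem_sup_left ⟨lam fun h => hij (congrArg (emb n) h), hι a b _ hij⟩

/-- For `n ≥ 3`, every `w ∈ V_n^*` is a finite product `∏_{j=1}^{k} g_j a_j g_j⁻¹` with each
`a_j ∈ V_n = {λ_{in}^{±1}, λ_{ni}^{±1} : 1 ≤ i ≤ n−1}` and each `g_j` in the image of the
inclusion `ι_n : VP (n-1) →* VP n` (determined by `λ_{ij} ↦ λ_{ij}`). -/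
theorem stmt_4 (n : ℕ) (hn : 3 ≤ n) (ι : VP (n - 1) →* VP n)
    (hι : ∀ (a b : Fin (n - 1)) (hab : a ≠ b) (hab' : emb n a ≠ emb n b),
      ι (lam hab) = lam hab')
    (w : VP n) (hw : w ∈ Subgroup.normalClosure (VstarSet n (by omega))) :
    ∃ (k : ℕ) (g a : Fin k → VP n),
      (∀ j, g j ∈ ι.range) ∧
      (∀ j, a j ∈ VstarSet n (by omega) ∪ (Inv.inv '' VstarSet n (by omega))) ∧
      w = (List.ofFn fun j => g j * a j * (g j)⁻¹).prod := by
  obtain ⟨l, hl, rfl⟩ :=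
    Subgroup.exists_list_of_mem_normalClosure (sup_closure_vstarSet_eq_top _ ι hι) hw
  rw [← Set.image_inv_eq_inv] at hl
  choose g hg a ha hga using fun j : Fin l.length => hl _ (l.get_mem j)
  refine ⟨l.length, g, a, hg, ha, ?_⟩
  simp only [← hga, List.ofFn_get]
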